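/- With ω(a₁…a_n) = Σ_{i=1}^n (−1)^i a_i in ℤ/3 and ω̃ defined by ω̃(0·α) = ω(α), ω̃(1·α) = 1 − ω(α), the following hold for every nonempty binary word α and every binary word β: (i) ω̃(α · 00 · β) = ω̃(α · β); (ii) ω̃(α · 11 · β) = ω̃(α · β); (iii) ω̃(α · 0) = ω̃(α). -/
import Mathlib


/-- The alternating weight of a binary word: `ω(a₁…a_n) = Σ (−1)^i a_i` in `ℤ/3` (1-indexed). -/
def wt : List Bool → ZMod 3
  | [] => 0
  | a :: α => -(if a then 1 else 0) - wt α

/-- The planar weight `ω̃`: `ω̃(ε) = 1`, `ω̃(0·α) = ω(α)`, `ω̃(1·α) = 1 − ω(α)`. -/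
def pwt : List Bool → ZMod 3
  | [] => 1
  | false :: α => wt α
  | true :: α => 1 - wt α

lemma wt_double (b : Bool) (γ β : List Bool) :
    wt (γ ++ b :: b :: β) = wt (γ ++ β) := by
  induction γ with
  | nil => cases b <;> simp [wt]
  | cons a γ ih => simp [wt, ih]

lemma wt_snoc_false (γ : List Bool) : wt (γ ++ [false]) = wt γ := by
  induction γ with
  | nil => simp [wt]
  | cons a γ ih => simp [wt, ih]

theorem planar_weight_props (α : List Bool) (hα : α ≠ []) (β : List Bool) :
    pwt (α ++ [false, false] ++ β) = pwt (α ++ β) ∧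
    pwt (α ++ [true, true] ++ β) = pwt (α ++ β) ∧
    pwt (α ++ [false]) = pwt α := by
  obtain ⟨a, γ, rfl⟩ : ∃ a γ, α = a :: γ := by
    cases α with
    | nil => exact absurd rfl hα
    | cons a γ => exact ⟨a, γ, rfl⟩
  cases a <;>
    simp [pwt, wt_double false γ β, wt_double true γ β, wt_snoc_false]
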